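/- arXiv:2503.10964 — 4 statements merged into one kernel-verified Lean document; each statement's English description precedes it below -/
import Mathlib

section
/- Suppose Z ∈ 𝕊^{n+m} is positive semidefinite with block decomposition Z = [[Z₁₁, Z₁₂],[Z₁₂ᵀ, Z₂₂]], and suppose ⟨Z, M Mᵀ⟩ = 0 where M = [P B R^{-1/2}; R^{1/2}] with R positive definite. If Z = U Uᵀ with U = [U₁; U₂] (U₁ ∈ ℝ^{n×n}, U₂ ∈ ℝ^{m×n}), then U₂ = −R⁻¹ Bᵀ P U₁, and consequently Z₁₂ = −Z₁₁ P B R⁻¹ and Z₂₂ = R⁻¹ Bᵀ P Z₁₁ P B R⁻¹. -/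
/-!
With `U = [U₁; U₂]`, the trace condition reads `‖Mᵀ U‖_F² = tr (Uᵀ M Mᵀ U) = 0`, so `Mᵀ U = 0`.
For the symmetric square root `S` of `R` this is `S⁻¹ Bᵀ P U₁ + S U₂ = 0`; multiplying by `S⁻¹`
gives `U₂ = -R⁻¹ Bᵀ P U₁`, and the blocks of `Z = U Uᵀ` are then read off.
-/

open Matrix

open scoped ComplexOrder in
noncomputable def Matrix.PosSemidef.sqrt {n : Type*} [Fintype n] [DecidableEq n]
    {𝕜 : Type*} [RCLike 𝕜] {A : Matrix n n 𝕜} (hA : A.PosSemidef) : Matrix n n 𝕜 :=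
  hA.1.eigenvectorUnitary.1 * diagonal ((↑) ∘ (√·) ∘ hA.1.eigenvalues) *
  (star hA.1.eigenvectorUnitary : Matrix n n 𝕜)

namespace Matrix.PosSemidef

open scoped ComplexOrder

variable {n 𝕜 : Type*} [Fintype n] [DecidableEq n] [RCLike 𝕜] {A : Matrix n n 𝕜}

theorem sqrt_eq_cfc (hA : A.PosSemidef) : hA.sqrt = cfc Real.sqrt A := by
  rw [hA.1.cfc_eq, IsHermitian.cfc, Unitary.conjStarAlgAut_apply]
  rfl

theorem isHermitian_sqrt (hA : A.PosSemidef) : hA.sqrt.IsHermitian :=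
  hA.sqrt_eq_cfc ▸ cfc_predicate Real.sqrt A

theorem sqrt_mul_self (hA : A.PosSemidef) : hA.sqrt * hA.sqrt = A := by
  rw [sqrt_eq_cfc, ← cfc_mul Real.sqrt Real.sqrt A]
  conv_rhs => rw [← cfc_id' ℝ A hA.1]
  refine cfc_congr fun x hx => ?_
  obtain ⟨i, rfl⟩ := hA.1.spectrum_real_eq_range_eigenvalues ▸ hx
  exact Real.mul_self_sqrt (hA.eigenvalues_nonneg i)

end Matrix.PosSemidef

namespace Matrix

variable {m n p R : Type*}

theorem conjTranspose_mul_eq_zero_of_trace_eq_zero [CommRing R] [PartialOrder R] [StarRing R]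
    [StarOrderedRing R] [NoZeroDivisors R] [Fintype m] [Fintype n] [Fintype p]
    {U : Matrix m p R} {M : Matrix m n R} (h : (U * Uᴴ * (M * Mᴴ)).trace = 0) : Mᴴ * U = 0 := by
  rw [← trace_conjTranspose_mul_self_eq_zero_iff, conjTranspose_mul, conjTranspose_conjTranspose]
  rw [Matrix.mul_assoc, trace_mul_comm] at h
  simpa only [Matrix.mul_assoc] using h

theorem eq_neg_of_transpose_fromRows_mul_fromRows_eq_zero [CommRing R] [Fintype m] [Fintype n]
    [DecidableEq m] {S : Matrix m m R} (hS : Sᵀ = S) (hSdet : IsUnit S.det) {X : Matrix n m R}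
    {U₁ : Matrix n p R} {U₂ : Matrix m p R}
    (h : (fromRows (X * S⁻¹) S)ᵀ * fromRows U₁ U₂ = 0) : U₂ = -((S * S)⁻¹ * Xᵀ * U₁) := by
  rw [transpose_fromRows, fromCols_mul_fromRows, transpose_mul, transpose_nonsing_inv, hS] at h
  have := congrArg (S⁻¹ * ·) h
  simp only [Matrix.mul_add, Matrix.mul_zero, ← Matrix.mul_assoc, nonsing_inv_mul S hSdet,
    Matrix.one_mul, ← mul_inv_rev] at this
  exact eq_neg_of_add_eq_zero_right this

theorem fromRows_mul_transpose_fromRows_neg_mul [CommRing R] [Fintype n] [Fintype p]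
    (U₁ : Matrix n p R) (K : Matrix m n R) :
    fromRows U₁ (-(K * U₁)) * (fromRows U₁ (-(K * U₁)))ᵀ =
      fromBlocks (U₁ * U₁ᵀ) (-(U₁ * U₁ᵀ * Kᵀ)) (-(K * (U₁ * U₁ᵀ))) (K * (U₁ * U₁ᵀ) * Kᵀ) := by
  simp only [transpose_fromRows, fromRows_mul_fromCols, transpose_neg, transpose_mul,
    Matrix.mul_neg, Matrix.neg_mul, neg_neg, Matrix.mul_assoc]

end Matrix

theorem complementary_slackness_recovery_general {n m : ℕ}
    (P : Matrix (Fin n) (Fin n) ℝ) (B : Matrix (Fin n) (Fin m) ℝ)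
    (R : Matrix (Fin m) (Fin m) ℝ) (hP : P.IsSymm) (hR : R.PosDef)
    (Z11 : Matrix (Fin n) (Fin n) ℝ) (Z12 : Matrix (Fin n) (Fin m) ℝ)
    (Z22 : Matrix (Fin m) (Fin m) ℝ)
    (U1 : Matrix (Fin n) (Fin n) ℝ) (U2 : Matrix (Fin m) (Fin n) ℝ)
    (Z : Matrix (Fin n ⊕ Fin m) (Fin n ⊕ Fin m) ℝ)
    (hZdef : Z = Matrix.fromBlocks Z11 Z12 Z12ᵀ Z22)
    (M : Matrix (Fin n ⊕ Fin m) (Fin m) ℝ)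
    (hM : M = Matrix.fromRows (P * B * (hR.posSemidef.sqrt)⁻¹) hR.posSemidef.sqrt)
    (htr : (Z * (M * Mᵀ)).trace = 0)
    (hZU : Z = Matrix.fromRows U1 U2 * (Matrix.fromRows U1 U2)ᵀ) :
    U2 = -(R⁻¹ * Bᵀ * P * U1) ∧
      Z12 = -(Z11 * P * B * R⁻¹) ∧
      Z22 = R⁻¹ * Bᵀ * P * Z11 * P * B * R⁻¹ := by
  set S := hR.posSemidef.sqrt
  have hS : Sᵀ = S := isHermitian_iff_isSymm.mp hR.posSemidef.isHermitian_sqrt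
  have hSS : S * S = R := hR.posSemidef.sqrt_mul_self
  have hSdet : IsUnit S.det :=
    (isUnit_iff_isUnit_det S).mp (isUnit_of_mul_isUnit_left (hSS ▸ hR.isUnit))
  have hMU : Mᵀ * fromRows U1 U2 = 0 := conjTranspose_mul_eq_zero_of_trace_eq_zero <| by
    simpa only [hZU, conjTranspose_eq_transpose_of_trivial] using htr
  have hU2 : U2 = -(R⁻¹ * Bᵀ * P * U1) := by
    have := eq_neg_of_transpose_fromRows_mul_fromRows_eq_zero hS hSdet (hM ▸ hMU)
    rwa [hSS, transpose_mul, hP.eq, ← Matrix.mul_assoc] at this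
  have hKT : (R⁻¹ * Bᵀ * P)ᵀ = P * B * R⁻¹ := by
    rw [transpose_mul, transpose_mul, transpose_nonsing_inv, hP.eq, transpose_transpose,
      isHermitian_iff_isSymm.mp hR.isHermitian |>.eq, Matrix.mul_assoc]
  rw [hU2, fromRows_mul_transpose_fromRows_neg_mul, hKT] at hZU
  obtain ⟨rfl, rfl, -, rfl⟩ := fromBlocks_inj.mp (hZdef.symm.trans hZU)
  exact ⟨hU2, by simp only [Matrix.mul_assoc], by simp only [Matrix.mul_assoc]⟩

/-- Complementary slackness step recovering the optimal LQR primal variable from the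
dual Riccati solution: if `Z = U Uᵀ ⪰ 0` has zero trace inner product with `M Mᵀ`
where `M = [P B R^{-1/2}; R^{1/2}]` and `R ≻ 0`, then `U₂ = −R⁻¹ Bᵀ P U₁`, and hence
`Z₁₂ = −Z₁₁ P B R⁻¹` and `Z₂₂ = R⁻¹ Bᵀ P Z₁₁ P B R⁻¹`. -/
theorem complementary_slackness_recovery {n m : ℕ}
    (P : Matrix (Fin n) (Fin n) ℝ) (B : Matrix (Fin n) (Fin m) ℝ)
    (R : Matrix (Fin m) (Fin m) ℝ) (hP : P.IsSymm) (hR : R.PosDef)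
    (Z11 : Matrix (Fin n) (Fin n) ℝ) (Z12 : Matrix (Fin n) (Fin m) ℝ)
    (Z22 : Matrix (Fin m) (Fin m) ℝ)
    (U1 : Matrix (Fin n) (Fin n) ℝ) (U2 : Matrix (Fin m) (Fin n) ℝ)
    (Z : Matrix (Fin n ⊕ Fin m) (Fin n ⊕ Fin m) ℝ)
    (hZdef : Z = Matrix.fromBlocks Z11 Z12 Z12ᵀ Z22)
    (hZpsd : Z.PosSemidef)
    (M : Matrix (Fin n ⊕ Fin m) (Fin m) ℝ)
    (hM : M = Matrix.fromRows (P * B * (hR.posSemidef.sqrt)⁻¹) hR.posSemidef.sqrt)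
    (htr : (Z * (M * Mᵀ)).trace = 0)
    (hZU : Z = Matrix.fromRows U1 U2 * (Matrix.fromRows U1 U2)ᵀ) :
    U2 = -(R⁻¹ * Bᵀ * P * U1) ∧
      Z12 = -(Z11 * P * B * R⁻¹) ∧
      Z22 = R⁻¹ * Bᵀ * P * Z11 * P * B * R⁻¹ :=
  complementary_slackness_recovery_general P B R hP hR Z11 Z12 Z22 U1 U2 Z hZdef M hM htr hZU
end

section
/- Consider the scalar LQR instance with A = 0, B = 1, Q = R = W = 1 (cost J(k) = k + 1/k for feedback gain u = −kx, stabilizing region k > 0). Then: (i) J attains its unique minimum J⋆ = 2 at k = 1; (ii) J'(k) = 1 − 1/k²; and (iii) the ratio (J(k) − 2)/(J'(k))² tends to +∞ as k → ∞, so no constant μ > 0 satisfies μ(J(k) − 2) ≤ (1/2)(J'(k))² for all k > 0. -/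
open Filter

/-!
Everything follows from the factorisations `k + 1/k - 2 = (k - 1)²/k` and
`1 - 1/k² = (k - 1)(k + 1)/k²`. The first gives the strict minimum at `k = 1`; together they
give `(J(k) - 2)/J'(k)² = k³/(k + 1)²` for `k ≠ 1`, which grows linearly. A gradient dominance
constant `μ` would bound this ratio by `1/(2μ)`.
-/

lemma add_one_div_sub_two {k : ℝ} (hk : k ≠ 0) : k + 1 / k - 2 = (k - 1) ^ 2 / k := by
  field_simp
  ring

lemma one_sub_one_div_sq {k : ℝ} (hk : k ≠ 0) : 1 - 1 / k ^ 2 = (k - 1) * (k + 1) / k ^ 2 := by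
  field_simp
  ring

lemma two_lt_add_one_div {k : ℝ} (hk : 0 < k) (hk1 : k ≠ 1) : 2 < k + 1 / k := by
  have hk1' : k - 1 ≠ 0 := sub_ne_zero.mpr hk1
  have : 0 < (k - 1) ^ 2 / k := by positivity
  linarith [add_one_div_sub_two hk.ne']

lemma hasDerivAt_add_one_div {k : ℝ} (hk : k ≠ 0) :
    HasDerivAt (fun k : ℝ => k + 1 / k) (1 - 1 / k ^ 2) k := by
  simpa only [one_div, sub_eq_add_neg] using (hasDerivAt_id' k).fun_add (hasDerivAt_inv hk)

lemma add_one_div_sub_two_div_one_sub_one_div_sq_sq {k : ℝ} (hk : 0 < k) (hk1 : k ≠ 1) :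
    (k + 1 / k - 2) / (1 - 1 / k ^ 2) ^ 2 = k ^ 3 / (k + 1) ^ 2 := by
  have hk1' : k - 1 ≠ 0 := sub_ne_zero.mpr hk1
  have hk1'' : k + 1 ≠ 0 := by positivity
  rw [add_one_div_sub_two hk.ne', one_sub_one_div_sq hk.ne']
  field_simp

lemma tendsto_pow_three_div_add_one_sq_atTop :
    Tendsto (fun k : ℝ => k ^ 3 / (k + 1) ^ 2) atTop atTop := by
  refine tendsto_atTop_mono' atTop ?_ (tendsto_id.atTop_div_const (by norm_num : (0 : ℝ) < 4))
  filter_upwards [eventually_ge_atTop (1 : ℝ)] with k hk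
  rw [id, le_div_iff₀ (by positivity)]
  nlinarith [sq_nonneg (k - 1)]

lemma Filter.Tendsto.not_eventually_mul_le {α : Type*} {l : Filter α} [l.NeBot]
    {f g : α → ℝ} (h : Tendsto (fun x => f x / g x) l atTop) (hg : ∀ᶠ x in l, 0 < g x)
    {μ : ℝ} (hμ : 0 < μ) (c : ℝ) : ¬ ∀ᶠ x in l, μ * f x ≤ c * g x := by
  intro hle
  obtain ⟨x, hx, hgx, hlex⟩ := (h.eventually_gt_atTop (c / μ)).and (hg.and hle) |>.exists
  rw [div_lt_div_iff₀ hμ hgx] at hx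
  linarith

/-- The scalar LQR cost `J(k) = k + 1/k` (with `A = 0, B = 1, Q = R = W = 1`,
stabilizing region `k > 0`): (i) `J` attains its unique minimum `2` at `k = 1`;
(ii) `J'(k) = 1 − 1/k²`; (iii) `(J(k) − 2)/(J'(k))² → ∞` as `k → ∞`, so no
`μ > 0` satisfies the gradient dominance inequality globally on `(0,∞)`. -/
theorem scalar_lqr_no_global_gradient_dominance :
    ((fun k : ℝ => k + 1 / k) 1 = 2 ∧
      ∀ k : ℝ, 0 < k → k ≠ 1 → 2 < k + 1 / k) ∧
    (∀ k : ℝ, 0 < k → HasDerivAt (fun k : ℝ => k + 1 / k) (1 - 1 / k ^ 2) k) ∧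
    (Tendsto (fun k : ℝ => ((k + 1 / k) - 2) / (1 - 1 / k ^ 2) ^ 2) atTop atTop ∧
      ¬ ∃ μ : ℝ, 0 < μ ∧ ∀ k : ℝ, 0 < k →
        μ * ((k + 1 / k) - 2) ≤ 1 / 2 * (1 - 1 / k ^ 2) ^ 2) := by
  have hratio : Tendsto (fun k : ℝ => ((k + 1 / k) - 2) / (1 - 1 / k ^ 2) ^ 2) atTop atTop := by
    refine tendsto_pow_three_div_add_one_sq_atTop.congr' ?_
    filter_upwards [eventually_gt_atTop (1 : ℝ)] with k hk
    exact (add_one_div_sub_two_div_one_sub_one_div_sq_sq (by linarith) hk.ne').symm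
  refine ⟨⟨by norm_num, fun k hk hk1 => two_lt_add_one_div hk hk1⟩,
    fun k hk => hasDerivAt_add_one_div hk.ne', hratio, ?_⟩
  rintro ⟨μ, hμ, hdom⟩
  have hderiv_sq_pos : ∀ᶠ k : ℝ in atTop, 0 < (1 - 1 / k ^ 2) ^ 2 := by
    filter_upwards [eventually_gt_atTop (1 : ℝ)] with k hk
    rw [one_sub_one_div_sq (by positivity)]
    have : 0 < k - 1 := by linarith
    positivity
  exact hratio.not_eventually_mul_le hderiv_sq_pos hμ (1 / 2)
    ((eventually_gt_atTop 0).mono hdom)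
end

section
/- Let R ∈ 𝕊ᵐ be positive definite, X ∈ 𝕊ⁿ positive definite, and Y, K⋆ arbitrary matrices of sizes m×n. Define f(Y, X) = tr(Q⋆X + X⁻¹YᵀRY + (K⋆)ᵀRY + YᵀRK⋆) where Q⋆ ∈ 𝕊ⁿ. Then f(Y,X) − f(0,X⋆) ≥ tr(X⁻¹ Yᵀ R Y) ≥ λ_min(R)·λ_min(X⁻¹)·‖Y‖_F², provided the first-order optimality inequality tr(Q⋆(X − X⋆)) + tr(2(RK⋆)ᵀY) ≥ 0 holds. -/
open Matrix

attribute [local instance] Matrix.frobeniusSeminormedAddCommGroup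

/-- Smallest eigenvalue of a Hermitian real matrix. -/
noncomputable def minEig {k : ℕ} {M : Matrix (Fin k) (Fin k) ℝ} (h : M.IsHermitian) : ℝ :=
  ⨅ i, h.eigenvalues i

/-- The convex reformulation cost of LQR in the lifted variables:
`f(Y, X) = tr(Q⋆X + X⁻¹YᵀRY + (K⋆)ᵀRY + YᵀRK⋆)`. -/
noncomputable def lqrCvx {n m : ℕ} (Qstar : Matrix (Fin n) (Fin n) ℝ)
    (R : Matrix (Fin m) (Fin m) ℝ) (Kstar : Matrix (Fin m) (Fin n) ℝ)
    (Y : Matrix (Fin m) (Fin n) ℝ) (X : Matrix (Fin n) (Fin n) ℝ) : ℝ :=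
  (Qstar * X + X⁻¹ * (Yᵀ * R * Y) + Kstarᵀ * (R * Y) + Yᵀ * (R * Kstar)).trace

/-!
Expanding `f(Y, X) - f(0, X⋆)` and using the symmetry of `R` gives
`tr(Q⋆(X - X⋆)) + 2 tr((RK⋆)ᵀY) + tr(X⁻¹YᵀRY)`, so the first inequality is the first-order
condition. For the second, `tr(AB) ≥ λ_min(B) tr A` whenever `A ⪰ 0`, because `B - λ_min(B) I ⪰ 0`
and the trace of a product of two positive semidefinite matrices is nonnegative. Applying this
to `tr(X⁻¹YᵀRY) = tr((YX⁻¹Yᵀ) R)` and then to `tr(YX⁻¹Yᵀ) = tr((YᵀY) X⁻¹)` leaves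
`tr(YᵀY) = ‖Y‖_F²`.
-/

open scoped MatrixOrder

namespace Matrix

theorem PosSemidef.trace_mul_nonneg {ι : Type*} [Fintype ι] [DecidableEq ι] {A B : Matrix ι ι ℝ}
    (hA : A.PosSemidef) (hB : B.PosSemidef) : 0 ≤ (A * B).trace := by
  obtain ⟨C, rfl⟩ := CStarAlgebra.nonneg_iff_eq_star_mul_self.mp hB.nonneg
  rw [← mul_assoc, trace_mul_cycle]
  exact (hA.mul_mul_conjTranspose_same C).trace_nonneg

theorem trace_transpose_mul_self_eq_frobenius_norm_sq {m n : ℕ} (Y : Matrix (Fin m) (Fin n) ℝ) :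
    (Yᵀ * Y).trace = ‖Y‖ ^ 2 := by
  rw [frobenius_norm_def, ← Real.rpow_natCast, ← Real.rpow_mul (by positivity), Finset.sum_comm]
  norm_num [trace, mul_apply, sq]

end Matrix

section minEig

variable {k : ℕ} {B : Matrix (Fin k) (Fin k) ℝ}

theorem minEig_nonneg (hB : B.PosSemidef) : 0 ≤ minEig hB.1 :=
  Real.iInf_nonneg hB.eigenvalues_nonneg

theorem minEig_smul_one_le (hB : B.IsHermitian) :
    minEig hB • (1 : Matrix (Fin k) (Fin k) ℝ) ≤ B := by
  rw [← Algebra.algebraMap_eq_smul_one, algebraMap_le_iff_le_spectrum hB,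
    hB.spectrum_real_eq_range_eigenvalues]
  rintro _ ⟨i, rfl⟩
  exact ciInf_le (Set.finite_range _).bddBelow i

theorem minEig_mul_trace_le_trace_mul {A : Matrix (Fin k) (Fin k) ℝ} (hA : A.PosSemidef)
    (hB : B.IsHermitian) : minEig hB * A.trace ≤ (A * B).trace := by
  have h := hA.trace_mul_nonneg (le_iff.mp (minEig_smul_one_le hB))
  rwa [mul_sub, trace_sub, Matrix.mul_smul, mul_one, trace_smul, smul_eq_mul, sub_nonneg] at h

theorem minEig_mul_minEig_mul_norm_sq_le_trace {m : ℕ} {P : Matrix (Fin k) (Fin k) ℝ}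
    {R : Matrix (Fin m) (Fin m) ℝ} (hP : P.PosSemidef) (hR : R.PosSemidef)
    (Y : Matrix (Fin m) (Fin k) ℝ) :
    minEig hR.1 * minEig hP.1 * ‖Y‖ ^ 2 ≤ (P * (Yᵀ * R * Y)).trace := by
  have hYPYt : (Y * P * Yᵀ).PosSemidef := by
    simpa using hP.mul_mul_conjTranspose_same Y
  have hYtY : (Yᵀ * Y).PosSemidef := by
    simpa using posSemidef_conjTranspose_mul_self Y
  calc minEig hR.1 * minEig hP.1 * ‖Y‖ ^ 2
      = minEig hR.1 * (minEig hP.1 * (Yᵀ * Y).trace) := by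
        rw [trace_transpose_mul_self_eq_frobenius_norm_sq, _root_.mul_assoc]
    _ ≤ minEig hR.1 * (Yᵀ * Y * P).trace :=
        mul_le_mul_of_nonneg_left (minEig_mul_trace_le_trace_mul hYtY hP.1) (minEig_nonneg hR)
    _ = minEig hR.1 * (Y * P * Yᵀ).trace := by rw [trace_mul_cycle Y P Yᵀ]
    _ ≤ (Y * P * Yᵀ * R).trace := minEig_mul_trace_le_trace_mul hYPYt hR.1
    _ = (P * (Yᵀ * R * Y)).trace := by
        rw [Matrix.mul_assoc (Y * P), trace_mul_comm, ← Matrix.mul_assoc, trace_mul_comm]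

end minEig

theorem lqrCvx_sub_lqrCvx_zero {n m : ℕ} (Qstar : Matrix (Fin n) (Fin n) ℝ)
    {R : Matrix (Fin m) (Fin m) ℝ} (hR : R.IsSymm) (Kstar : Matrix (Fin m) (Fin n) ℝ)
    (Y : Matrix (Fin m) (Fin n) ℝ) (X Xstar : Matrix (Fin n) (Fin n) ℝ) :
    lqrCvx Qstar R Kstar Y X - lqrCvx Qstar R Kstar 0 Xstar =
      (Qstar * (X - Xstar)).trace + 2 * ((R * Kstar)ᵀ * Y).trace + (X⁻¹ * (Yᵀ * R * Y)).trace := by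
  have hKRY : (Kstarᵀ * (R * Y)).trace = ((R * Kstar)ᵀ * Y).trace := by
    rw [transpose_mul, hR.eq, Matrix.mul_assoc]
  have hYRK : (Yᵀ * (R * Kstar)).trace = ((R * Kstar)ᵀ * Y).trace := by
    rw [← trace_transpose, transpose_mul, transpose_transpose]
  simp only [lqrCvx, trace_add, mul_sub, trace_sub, hKRY, hYRK, transpose_zero,
    Matrix.zero_mul, Matrix.mul_zero, trace_zero]
  ring

theorem lqr_cvx_quadratic_growth_general {n m : ℕ}
    (Qstar : Matrix (Fin n) (Fin n) ℝ)
    (R : Matrix (Fin m) (Fin m) ℝ) (hR : R.PosDef)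
    (Kstar : Matrix (Fin m) (Fin n) ℝ)
    (X Xstar : Matrix (Fin n) (Fin n) ℝ) (hX : X.PosDef)
    (Y : Matrix (Fin m) (Fin n) ℝ)
    (hfoc : 0 ≤ (Qstar * (X - Xstar)).trace + 2 * ((R * Kstar)ᵀ * Y).trace) :
    (X⁻¹ * (Yᵀ * R * Y)).trace ≤ lqrCvx Qstar R Kstar Y X - lqrCvx Qstar R Kstar 0 Xstar ∧
      minEig hR.posSemidef.1 * minEig hX.inv.1 * ‖Y‖ ^ 2 ≤ (X⁻¹ * (Yᵀ * R * Y)).trace := by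
  refine ⟨?_, minEig_mul_minEig_mul_norm_sq_le_trace hX.inv.posSemidef hR.posSemidef Y⟩
  rw [lqrCvx_sub_lqrCvx_zero Qstar (isHermitian_iff_isSymm.mp hR.1) Kstar Y X Xstar]
  linarith

/-- Key quadratic-growth inequality for the convex reformulation of LQR:
if the first-order optimality inequality `tr(Q⋆(X − X⋆)) + tr(2(RK⋆)ᵀY) ≥ 0` holds,
then `f(Y,X) − f(0,X⋆) ≥ tr(X⁻¹YᵀRY) ≥ λ_min(R) λ_min(X⁻¹) ‖Y‖_F²`. -/
theorem lqr_cvx_quadratic_growth {n m : ℕ}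
    (Qstar : Matrix (Fin n) (Fin n) ℝ) (hQstar : Qstar.IsSymm)
    (R : Matrix (Fin m) (Fin m) ℝ) (hR : R.PosDef)
    (Kstar : Matrix (Fin m) (Fin n) ℝ)
    (X Xstar : Matrix (Fin n) (Fin n) ℝ) (hX : X.PosDef) (hXstar : Xstar.PosDef)
    (Y : Matrix (Fin m) (Fin n) ℝ)
    (hfoc : 0 ≤ (Qstar * (X - Xstar)).trace + 2 * ((R * Kstar)ᵀ * Y).trace) :
    (X⁻¹ * (Yᵀ * R * Y)).trace ≤ lqrCvx Qstar R Kstar Y X - lqrCvx Qstar R Kstar 0 Xstar ∧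
      minEig hR.posSemidef.1 * minEig hX.inv.1 * ‖Y‖ ^ 2 ≤ (X⁻¹ * (Yᵀ * R * Y)).trace :=
  lqr_cvx_quadratic_growth_general Qstar R hR Kstar X Xstar hX Y hfoc
end

section
/- Let x: [0,∞) → ℝⁿ and u: [0,∞) → ℝᵐ satisfy ẋ = Ax + Bu with x(0) = x₀, x, u square-integrable, and x(t) → 0 as t → ∞. Then the Gramian blocks Z₁₁ = ∫₀^∞ x xᵀ dt, Z₁₂ = ∫₀^∞ x uᵀ dt satisfy the linear constraint A Z₁₁ + B Z₁₂ᵀ + Z₁₁ Aᵀ + Z₁₂ Bᵀ + x₀x₀ᵀ = 0. -/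
/-!
Along a trajectory, `d/dt (x xᵀ) = (Ax + Bu) xᵀ + x (Ax + Bu)ᵀ`. Both terms are integrable since
`x` and `u` are square-integrable, and `x(t) x(t)ᵀ → 0`, so integrating over `[0, ∞)` gives
`∫ ((Ax + Bu) xᵀ + x (Ax + Bu)ᵀ) = -x₀ x₀ᵀ`. The left-hand side splits, by linearity of the
integral, into the Gramian terms of the constraint.
-/

open MeasureTheory Matrix Filter Set Topology

section Gramian

variable {α ι κ ν : Type*} {mα : MeasurableSpace α} {μ : Measure α}

noncomputable def gramian (μ : Measure α) (f : α → ι → ℝ) (g : α → κ → ℝ) : Matrix ι κ ℝ :=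
  Matrix.of fun i j => ∫ t, f t i * g t j ∂μ

lemma MeasureTheory.MemLp.mulVec [Fintype ι] [Fintype κ] {p : ENNReal} {f : α → κ → ℝ}
    (hf : MemLp f p μ) (A : Matrix ι κ ℝ) : MemLp (fun t => A *ᵥ f t) p μ :=
  (LinearMap.toContinuousLinearMap (Matrix.mulVecLin A)).comp_memLp' hf

lemma MeasureTheory.MemLp.integrable_mul_apply [Fintype ι] [Fintype κ] {f : α → ι → ℝ}
    {g : α → κ → ℝ} (hf : MemLp f 2 μ) (hg : MemLp g 2 μ) (i : ι) (j : κ) :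
    Integrable (fun t => f t i * g t j) μ :=
  (hf.eval i).integrable_mul (hg.eval j)

lemma gramian_transpose (f : α → ι → ℝ) (g : α → κ → ℝ) :
    (gramian μ f g)ᵀ = gramian μ g f := by
  ext i j
  simp only [gramian, transpose_apply, of_apply, mul_comm]

lemma mul_gramian [Fintype κ] [Fintype ν] {f : α → κ → ℝ} {g : α → ν → ℝ} (A : Matrix ι κ ℝ)
    (hf : MemLp f 2 μ) (hg : MemLp g 2 μ) :
    A * gramian μ f g = gramian μ (fun t => A *ᵥ f t) g := by
  ext i j
  simp only [gramian, mul_apply, of_apply, mulVec, dotProduct, Finset.sum_mul, mul_assoc]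
  rw [integral_finsetSum _ fun k _ => (hf.integrable_mul_apply hg k j).const_mul (A i k)]
  simp only [integral_const_mul]

lemma gramian_mul_transpose [Fintype κ] [Fintype ν] {f : α → ν → ℝ} {g : α → κ → ℝ}
    (B : Matrix ι κ ℝ) (hf : MemLp f 2 μ) (hg : MemLp g 2 μ) :
    gramian μ f g * Bᵀ = gramian μ f (fun t => B *ᵥ g t) := by
  rw [← gramian_transpose g f, ← transpose_mul, mul_gramian B hg hf, gramian_transpose]

lemma gramian_add_left [Fintype ι] [Fintype κ] {f₁ f₂ : α → ι → ℝ} {g : α → κ → ℝ}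
    (hf₁ : MemLp f₁ 2 μ) (hf₂ : MemLp f₂ 2 μ) (hg : MemLp g 2 μ) :
    gramian μ f₁ g + gramian μ f₂ g = gramian μ (fun t => f₁ t + f₂ t) g := by
  ext i j
  simp only [gramian, Matrix.add_apply, of_apply, Pi.add_apply, add_mul]
  rw [← integral_add (hf₁.integrable_mul_apply hg i j) (hf₂.integrable_mul_apply hg i j)]

lemma gramian_add_right [Fintype ι] [Fintype κ] {f : α → ι → ℝ} {g₁ g₂ : α → κ → ℝ}
    (hf : MemLp f 2 μ) (hg₁ : MemLp g₁ 2 μ) (hg₂ : MemLp g₂ 2 μ) :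
    gramian μ f g₁ + gramian μ f g₂ = gramian μ f (fun t => g₁ t + g₂ t) := by
  rw [← gramian_transpose g₁, ← gramian_transpose g₂, ← transpose_add,
    gramian_add_left hg₁ hg₂ hf, gramian_transpose]

lemma gramian_add_gramian_eq_neg_vecMulVec [Fintype ι] {x v : ℝ → ι → ℝ} {a : ℝ}
    (hderiv : ∀ i, ∀ t, a ≤ t → HasDerivAt (fun s => x s i) (v t i) t)
    (hx : MemLp x 2 (volume.restrict (Ici a))) (hv : MemLp v 2 (volume.restrict (Ici a)))
    (hlim : Tendsto x atTop (𝓝 0)) :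
    gramian (volume.restrict (Ici a)) v x + gramian (volume.restrict (Ici a)) x v =
      -vecMulVec (x a) (x a) := by
  ext i j
  have hprod : Tendsto (fun t => x t i * x t j) atTop (𝓝 0) := by
    simpa using (tendsto_pi_nhds.1 hlim i).mul (tendsto_pi_nhds.1 hlim j)
  have hint : Integrable (fun t => v t i * x t j + x t i * v t j) (volume.restrict (Ici a)) :=
    (hv.integrable_mul_apply hx i j).add (hx.integrable_mul_apply hv i j)
  simp only [gramian, Matrix.add_apply, of_apply, Matrix.neg_apply, Matrix.vecMulVec_apply]
  rw [← integral_add (hv.integrable_mul_apply hx i j) (hx.integrable_mul_apply hv i j),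
    integral_Ici_eq_integral_Ioi, integral_Ioi_of_hasDerivAt_of_tendsto'
      (fun t ht => (hderiv i t ht).mul (hderiv j t ht))
      (IntegrableOn.mono_set hint Ioi_subset_Ici_self) hprod,
    zero_sub, Pi.mul_apply]

end Gramian

/-- Trajectory Gramians satisfy the SDP linear constraint: if `ẋ = Ax + Bu`,
`x, u` are (coordinatewise) square-integrable on `[0,∞)` and `x(t) → 0`, then the
Gramian blocks `Z₁₁ = ∫ x xᵀ`, `Z₁₂ = ∫ x uᵀ` satisfy
`A Z₁₁ + B Z₁₂ᵀ + Z₁₁ Aᵀ + Z₁₂ Bᵀ + x₀ x₀ᵀ = 0`. -/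
theorem gramian_linear_constraint {n m : ℕ}
    (A : Matrix (Fin n) (Fin n) ℝ) (B : Matrix (Fin n) (Fin m) ℝ)
    (x : ℝ → Fin n → ℝ) (u : ℝ → Fin m → ℝ)
    (hdyn : ∀ i, ∀ t : ℝ, 0 ≤ t →
      HasDerivAt (fun s => x s i) ((A *ᵥ x t + B *ᵥ u t) i) t)
    (hxL2 : ∀ i, MemLp (fun t => x t i) 2 (volume.restrict (Set.Ici (0 : ℝ))))
    (huL2 : ∀ j, MemLp (fun t => u t j) 2 (volume.restrict (Set.Ici (0 : ℝ))))
    (hlim : Filter.Tendsto x Filter.atTop (nhds 0)) :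
    A * (Matrix.of fun i j => ∫ t in Set.Ici (0 : ℝ), x t i * x t j) +
        B * (Matrix.of fun i j => ∫ t in Set.Ici (0 : ℝ), x t i * u t j)ᵀ +
        (Matrix.of fun i j => ∫ t in Set.Ici (0 : ℝ), x t i * x t j) * Aᵀ +
        (Matrix.of fun i j => ∫ t in Set.Ici (0 : ℝ), x t i * u t j) * Bᵀ +
        Matrix.vecMulVec (x 0) (x 0) = 0 := by
  set μ := volume.restrict (Ici (0 : ℝ))
  have hx : MemLp x 2 μ := MemLp.of_eval hxL2
  have hu : MemLp u 2 μ := MemLp.of_eval huL2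
  change A * gramian μ x x + B * (gramian μ x u)ᵀ + gramian μ x x * Aᵀ + gramian μ x u * Bᵀ +
    vecMulVec (x 0) (x 0) = 0
  rw [gramian_transpose, mul_gramian A hx hx, mul_gramian B hu hx, gramian_mul_transpose A hx hx,
    gramian_mul_transpose B hx hu, gramian_add_left (hx.mulVec A) (hu.mulVec B) hx,
    add_assoc _ _ (gramian μ x _), gramian_add_right hx (hx.mulVec A) (hu.mulVec B),
    gramian_add_gramian_eq_neg_vecMulVec hdyn hx ((hx.mulVec A).add (hu.mulVec B)) hlim,
    neg_add_cancel]
end
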